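/- arXiv:2302.14194 — 2 statements merged into one kernel-verified Lean document; each statement's English description precedes it below -/
import Mathlib

section
/- Let d ≥ 1 and let p, q : Fin (d+1) → EuclideanSpace ℝ (Fin d) be two affinely independent families of points (so conv(range p) and conv(range q) are d-dimensional simplices). Assume: (1) 0 ∈ interior (convexHull ℝ (Set.range q)); (2) ‖q i − q j‖ ≤ ‖p i − p j‖ for all i, j; (3) ‖p i‖ ≤ ‖q i‖ for all i. Then there exists a linear isometry equivalence T : EuclideanSpace ℝ (Fin d) ≃ₗᵢ EuclideanSpace ℝ (Fin d) with T (p i) = q i for all i. -/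
/-!
Let `w` be the barycentric coordinates of `0` with respect to `q`; they are positive because `0`
lies in the interior of the simplex. For any family `v`,
`∑ᵢ ∑ⱼ wᵢ wⱼ ‖vᵢ - vⱼ‖² = 2 ∑ᵢ wᵢ ‖vᵢ‖² - 2 ‖∑ᵢ wᵢ vᵢ‖²`, and the last term vanishes for `v = q`.
The hypotheses then give the chain
`∑∑ wᵢ wⱼ ‖qᵢ - qⱼ‖² ≤ ∑∑ wᵢ wⱼ ‖pᵢ - pⱼ‖² ≤ 2 ∑ wᵢ ‖pᵢ‖² ≤ 2 ∑ wᵢ ‖qᵢ‖² = ∑∑ wᵢ wⱼ ‖qᵢ - qⱼ‖²`,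
so every termwise inequality is an equality. Hence `p` and `q` have the same Gram matrix, and
since `q` spans the space, `qᵢ ↦ pᵢ` extends to a linear isometry.
-/

open Finset RealInnerProductSpace

variable {ι E F : Type*}
  [NormedAddCommGroup E] [InnerProductSpace ℝ E] [NormedAddCommGroup F] [InnerProductSpace ℝ F]

theorem Finset.eq_of_le_of_sum_mul_le {s : Finset ι} {w f g : ι → ℝ} (hw : ∀ i ∈ s, 0 < w i)
    (hfg : ∀ i ∈ s, f i ≤ g i) (h : ∑ i ∈ s, w i * g i ≤ ∑ i ∈ s, w i * f i) :
    ∀ i ∈ s, f i = g i := by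
  by_contra! hne
  obtain ⟨i, hi, hne⟩ := hne
  have hlt : ∑ i ∈ s, w i * f i < ∑ i ∈ s, w i * g i :=
    sum_lt_sum (fun j hj => mul_le_mul_of_nonneg_left (hfg j hj) (hw j hj).le)
      ⟨i, hi, mul_lt_mul_of_pos_left (lt_of_le_of_ne (hfg i hi) hne) (hw i hi)⟩
  exact hlt.not_ge h

theorem AffineBasis.span_eq_top {k V : Type*} [Ring k] [AddCommGroup V] [Module k V] [Fintype ι]
    (b : AffineBasis ι k V) : Submodule.span k (Set.range b) = ⊤ :=
  eq_top_iff.2 <| (Submodule.top_le_span_range_iff_forall_exists_fun k).2 fun x =>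
    ⟨fun i => b.coord i x, b.linear_combination_coord_eq_self x⟩

theorem norm_sum_smul_sq [Fintype ι] (c : ι → ℝ) (v : ι → E) :
    ‖∑ i, c i • v i‖ ^ 2 = ∑ i, ∑ j, c i * c j * ⟪v i, v j⟫ := by
  simp only [← real_inner_self_eq_norm_sq, sum_inner, inner_sum, real_inner_smul_left,
    real_inner_smul_right, mul_assoc]
  exact sum_congr rfl fun i _ => sum_congr rfl fun j _ => by rw [real_inner_comm]

theorem sum_sum_mul_norm_sub_sq [Fintype ι] {w : ι → ℝ} (hw : ∑ i, w i = 1) (v : ι → E) :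
    ∑ i, ∑ j, w i * w j * ‖v i - v j‖ ^ 2
      = 2 * ∑ i, w i * ‖v i‖ ^ 2 - 2 * ‖∑ i, w i • v i‖ ^ 2 := by
  have hright : ∑ i, ∑ j, w i * w j * ‖v j‖ ^ 2 = ∑ j, w j * ‖v j‖ ^ 2 := by
    rw [sum_comm]
    exact sum_congr rfl fun j _ => by rw [← sum_mul, ← sum_mul, hw, one_mul]
  simp only [norm_sub_sq_real, norm_sum_smul_sq, mul_add, mul_sub, sum_add_distrib,
    sum_sub_distrib, hright, mul_left_comm _ (2 : ℝ), ← mul_sum, ← sum_mul, hw, mul_one]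
  ring

theorem inner_eq_of_norm_sq_eq {p : ι → E} {q : ι → F} (hn : ∀ i, ‖p i‖ ^ 2 = ‖q i‖ ^ 2)
    (hd : ∀ i j, ‖p i - p j‖ ^ 2 = ‖q i - q j‖ ^ 2) (i j : ι) : ⟪p i, p j⟫ = ⟪q i, q j⟫ := by
  have hp := norm_sub_sq_real (p i) (p j)
  have hq := norm_sub_sq_real (q i) (q j)
  linarith [hn i, hn j, hd i j]

theorem norm_sum_smul_eq_of_inner_eq [Fintype ι] {p : ι → E} {q : ι → F}
    (h : ∀ i j, ⟪p i, p j⟫ = ⟪q i, q j⟫) (c : ι → ℝ) : ‖∑ i, c i • q i‖ = ‖∑ i, c i • p i‖ := by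
  rw [← sq_eq_sq₀ (norm_nonneg _) (norm_nonneg _), norm_sum_smul_sq, norm_sum_smul_sq]
  simp only [h]

theorem exists_linearIsometry_of_inner_eq [Fintype ι] {p : ι → E} {q : ι → F}
    (hp : Submodule.span ℝ (Set.range p) = ⊤) (h : ∀ i j, ⟪p i, p j⟫ = ⟪q i, q j⟫) :
    ∃ T : E →ₗᵢ[ℝ] F, ∀ i, T (p i) = q i := by
  set Lp := Fintype.linearCombination ℝ p
  set Lq := Fintype.linearCombination ℝ q
  have hnorm (c : ι → ℝ) : ‖Lq c‖ = ‖Lp c‖ := by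
    simpa only [Lp, Lq, Fintype.linearCombination_apply] using norm_sum_smul_eq_of_inner_eq h c
  obtain ⟨s, hs⟩ := Lp.exists_rightInverse_of_surjective (by rwa [Fintype.range_linearCombination])
  have hLps (x : E) : Lp (s x) = x := LinearMap.congr_fun hs x
  refine ⟨⟨Lq ∘ₗ s, fun x => by simp only [LinearMap.comp_apply, hnorm, hLps]⟩, fun i => ?_⟩
  classical
  have hpi : p i = Lp (Pi.single i 1) := by simp [Lp]
  have hqi : q i = Lq (Pi.single i 1) := by simp [Lq]
  rw [LinearIsometry.coe_mk, LinearMap.comp_apply, hpi, hqi, ← sub_eq_zero, ← map_sub,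
    ← norm_eq_zero, hnorm, map_sub, hLps, sub_self, norm_zero]

theorem inner_eq_of_norm_sub_le_of_norm_le [Fintype ι] {p : ι → E} {q : ι → F} {w : ι → ℝ}
    (hw : ∀ i, 0 < w i) (hw1 : ∑ i, w i = 1) (hq0 : ∑ i, w i • q i = 0)
    (hedge : ∀ i j, ‖q i - q j‖ ≤ ‖p i - p j‖) (hvert : ∀ i, ‖p i‖ ≤ ‖q i‖) (i j : ι) :
    ⟪p i, p j⟫ = ⟪q i, q j⟫ := by
  have hp_id := sum_sum_mul_norm_sub_sq hw1 p
  have hq_id := sum_sum_mul_norm_sub_sq hw1 q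
  rw [hq0, norm_zero] at hq_id
  have hedge_sq (x : ι × ι) : ‖q x.1 - q x.2‖ ^ 2 ≤ ‖p x.1 - p x.2‖ ^ 2 := by gcongr; exact hedge ..
  have hvert_sq (i : ι) : ‖p i‖ ^ 2 ≤ ‖q i‖ ^ 2 := by gcongr; exact hvert i
  have hsum_edge : ∑ i, ∑ j, w i * w j * ‖q i - q j‖ ^ 2
      ≤ ∑ i, ∑ j, w i * w j * ‖p i - p j‖ ^ 2 := by
    gcongr with i _ j _
    · exact mul_nonneg (hw i).le (hw j).le
    · exact hedge i j
  have hsum_vert : ∑ i, w i * ‖p i‖ ^ 2 ≤ ∑ i, w i * ‖q i‖ ^ 2 := by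
    gcongr with i
    · exact (hw i).le
    · exact hvert i
  have hnorm (i : ι) : ‖p i‖ ^ 2 = ‖q i‖ ^ 2 :=
    eq_of_le_of_sum_mul_le (fun i _ => hw i) (fun i _ => hvert_sq i)
      (by linarith [sq_nonneg ‖∑ i, w i • p i‖]) i (mem_univ i)
  have hdist (x : ι × ι) : ‖q x.1 - q x.2‖ ^ 2 = ‖p x.1 - p x.2‖ ^ 2 := by
    refine eq_of_le_of_sum_mul_le (w := fun x => w x.1 * w x.2)
      (fun x _ => mul_pos (hw x.1) (hw x.2)) (fun x _ => hedge_sq x) ?_ x (mem_univ x)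
    simp only [Fintype.sum_prod_type]
    linarith [sq_nonneg ‖∑ i, w i • p i‖]
  exact inner_eq_of_norm_sq_eq hnorm (fun i j => (hdist (i, j)).symm) i j

theorem simplex_rigidity_general (d : ℕ)
    (p q : Fin (d + 1) → EuclideanSpace ℝ (Fin d))
    (hq : AffineIndependent ℝ q)
    (h0 : (0 : EuclideanSpace ℝ (Fin d)) ∈ interior (convexHull ℝ (Set.range q)))
    (hedge : ∀ i j, ‖q i - q j‖ ≤ ‖p i - p j‖)
    (hvert : ∀ i, ‖p i‖ ≤ ‖q i‖) :
    ∃ T : EuclideanSpace ℝ (Fin d) ≃ₗᵢ[ℝ] EuclideanSpace ℝ (Fin d),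
      ∀ i, T (p i) = q i := by
  let b : AffineBasis (Fin (d + 1)) ℝ (EuclideanSpace ℝ (Fin d)) :=
    ⟨q, hq, by rw [hq.affineSpan_eq_top_iff_card_eq_finrank_add_one]; simp⟩
  have hw : ∀ i, 0 < b.coord i 0 := by
    rwa [show Set.range q = Set.range b from rfl, b.interior_convexHull] at h0
  have hinner := inner_eq_of_norm_sub_le_of_norm_le hw (b.sum_coord_apply_eq_one 0)
    (b.linear_combination_coord_eq_self 0) hedge hvert
  obtain ⟨T, hT⟩ := exists_linearIsometry_of_inner_eq b.span_eq_top fun i j => (hinner i j).symm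
  exact ⟨(T.toLinearIsometryEquiv rfl).symm,
    fun i => (LinearIsometryEquiv.symm_apply_eq _).2 (hT i).symm⟩

theorem simplex_rigidity (d : ℕ) (hd : 1 ≤ d)
    (p q : Fin (d + 1) → EuclideanSpace ℝ (Fin d))
    (hp : AffineIndependent ℝ p) (hq : AffineIndependent ℝ q)
    (h0 : (0 : EuclideanSpace ℝ (Fin d)) ∈ interior (convexHull ℝ (Set.range q)))
    (hedge : ∀ i j, ‖q i - q j‖ ≤ ‖p i - p j‖)
    (hvert : ∀ i, ‖p i‖ ≤ ‖q i‖) :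
    ∃ T : EuclideanSpace ℝ (Fin d) ≃ₗᵢ[ℝ] EuclideanSpace ℝ (Fin d),
      ∀ i, T (p i) = q i :=
  simplex_rigidity_general d p q hq h0 hedge hvert
end

section
/- Let M : Matrix (Fin n) (Fin n) ℝ be symmetric with exactly one positive eigenvalue θ (counted with multiplicity in the list of n real eigenvalues of M), the positive eigenvalue having multiplicity one, and let z : Fin n → ℝ be an eigenvector of M for the eigenvalue θ. Let X : Matrix (Fin n) (Fin e) ℝ satisfy Matrix.vecMul z X = 0 (i.e. every column of X is orthogonal to z). Then Matrix.trace (M * X * Xᵀ) ≤ 0, and equality Matrix.trace (M * X * Xᵀ) = 0 holds if and only if M * X = 0. -/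
/-!
Since `tr (M X Xᵀ) = ∑ⱼ xⱼᵀ M xⱼ` over the columns `xⱼ` of `X`, it suffices to treat one vector
`x ⊥ z`. In an orthonormal eigenbasis `bᵢ` of `M`, with `cᵢ = ⟪bᵢ, x⟫`, we have
`xᵀ M x = ∑ λᵢ cᵢ²`, and `M x = 0` iff every `λᵢ cᵢ` vanishes. The eigenvector `z` for `θ > 0`
is a multiple of the unique eigenvector with positive eigenvalue, so `x ⊥ z` kills that
component and every remaining term `λᵢ cᵢ²` is `≤ 0`.
-/

open Matrix

namespace OrthonormalBasis

variable {ι κ : Type*} [Fintype ι] [Fintype κ]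

theorem sum_dotProduct_mul_dotProduct (b : OrthonormalBasis κ ℝ (EuclideanSpace ℝ ι))
    (x y : ι → ℝ) : ∑ i, (⇑(b i) ⬝ᵥ x) * (⇑(b i) ⬝ᵥ y) = x ⬝ᵥ y := by
  simpa [EuclideanSpace.inner_eq_star_dotProduct, dotProduct_comm]
    using b.sum_inner_mul_inner (WithLp.toLp 2 x) (WithLp.toLp 2 y)

theorem eq_zero_of_forall_dotProduct_eq_zero (b : OrthonormalBasis κ ℝ (EuclideanSpace ℝ ι))
    {x : ι → ℝ} (hx : ∀ i, ⇑(b i) ⬝ᵥ x = 0) : x = 0 := by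
  rw [← dotProduct_self_eq_zero, ← b.sum_dotProduct_mul_dotProduct]
  simp [hx]

end OrthonormalBasis

namespace Matrix

theorem trace_mul_mul_transpose {ι κ R : Type*} [Fintype ι] [Fintype κ] [CommSemiring R]
    (A : Matrix ι ι R) (X : Matrix ι κ R) :
    trace (A * X * Xᵀ) = ∑ j, Xᵀ j ⬝ᵥ A *ᵥ Xᵀ j := by
  rw [trace_mul_comm]
  rfl

theorem mul_eq_zero_iff_forall_mulVec_transpose {ι κ R : Type*} [Fintype ι] [Semiring R]
    (A : Matrix ι ι R) (X : Matrix ι κ R) : A * X = 0 ↔ ∀ j, A *ᵥ Xᵀ j = 0 := by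
  simp only [← Matrix.ext_iff, funext_iff]
  exact forall_comm

namespace IsHermitian

variable {ι : Type*} [Fintype ι] [DecidableEq ι] {A : Matrix ι ι ℝ} (hA : A.IsHermitian)

theorem eigenvectorBasis_dotProduct_mulVec (i : ι) (x : ι → ℝ) :
    ⇑(hA.eigenvectorBasis i) ⬝ᵥ A *ᵥ x = hA.eigenvalues i * (⇑(hA.eigenvectorBasis i) ⬝ᵥ x) := by
  rw [dotProduct_mulVec, ← mulVec_transpose, ← conjTranspose_eq_transpose_of_trivial, hA.eq,
    mulVec_eigenvectorBasis, smul_dotProduct, smul_eq_mul]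

theorem dotProduct_mulVec_self_eq_sum (x : ι → ℝ) :
    x ⬝ᵥ A *ᵥ x = ∑ i, hA.eigenvalues i * (⇑(hA.eigenvectorBasis i) ⬝ᵥ x) ^ 2 := by
  rw [← hA.eigenvectorBasis.sum_dotProduct_mul_dotProduct]
  congr! 1 with i
  rw [hA.eigenvectorBasis_dotProduct_mulVec]
  ring

theorem mulVec_eq_zero_iff (x : ι → ℝ) :
    A *ᵥ x = 0 ↔ ∀ i, hA.eigenvalues i * (⇑(hA.eigenvectorBasis i) ⬝ᵥ x) = 0 := by
  simp only [← hA.eigenvectorBasis_dotProduct_mulVec]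
  exact ⟨fun h i => by rw [h, dotProduct_zero],
    hA.eigenvectorBasis.eq_zero_of_forall_dotProduct_eq_zero⟩

theorem eigenvalues_eq_of_mulVec_eq_smul {θ : ℝ} {z : ι → ℝ} (hz : A *ᵥ z = θ • z) {i : ι}
    (hi : ⇑(hA.eigenvectorBasis i) ⬝ᵥ z ≠ 0) : hA.eigenvalues i = θ := by
  have h := hA.eigenvectorBasis_dotProduct_mulVec i z
  rw [hz, dotProduct_smul, smul_eq_mul] at h
  exact (mul_right_cancel₀ hi h).symm

theorem eigenvalues_mul_sq_dotProduct_nonpos {x : ι → ℝ}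
    (hx : ∀ i, 0 < hA.eigenvalues i → ⇑(hA.eigenvectorBasis i) ⬝ᵥ x = 0) (i : ι) :
    hA.eigenvalues i * (⇑(hA.eigenvectorBasis i) ⬝ᵥ x) ^ 2 ≤ 0 := by
  rcases le_or_gt (hA.eigenvalues i) 0 with hneg | hpos
  · exact mul_nonpos_of_nonpos_of_nonneg hneg (sq_nonneg _)
  · simp [hx i hpos]

theorem dotProduct_mulVec_self_nonpos {x : ι → ℝ}
    (hx : ∀ i, 0 < hA.eigenvalues i → ⇑(hA.eigenvectorBasis i) ⬝ᵥ x = 0) :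
    x ⬝ᵥ A *ᵥ x ≤ 0 := by
  rw [hA.dotProduct_mulVec_self_eq_sum]
  exact Finset.sum_nonpos fun i _ => hA.eigenvalues_mul_sq_dotProduct_nonpos hx i

theorem dotProduct_mulVec_self_eq_zero_iff {x : ι → ℝ}
    (hx : ∀ i, 0 < hA.eigenvalues i → ⇑(hA.eigenvectorBasis i) ⬝ᵥ x = 0) :
    x ⬝ᵥ A *ᵥ x = 0 ↔ A *ᵥ x = 0 := by
  rw [hA.dotProduct_mulVec_self_eq_sum, hA.mulVec_eq_zero_iff,
    Finset.sum_eq_zero_iff_of_nonpos fun i _ => hA.eigenvalues_mul_sq_dotProduct_nonpos hx i]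
  simp

theorem eigenvectorBasis_dotProduct_eq_zero_of_dotProduct_eq_zero {i₀ : ι}
    (hpos : ∀ i, 0 < hA.eigenvalues i → i = i₀) {θ : ℝ} (hθ : 0 < θ) {z : ι → ℝ} (hz : z ≠ 0)
    (hzeig : A *ᵥ z = θ • z) {x : ι → ℝ} (hzx : z ⬝ᵥ x = 0) (i : ι) (hi : 0 < hA.eigenvalues i) :
    ⇑(hA.eigenvectorBasis i) ⬝ᵥ x = 0 := by
  obtain rfl := hpos i hi
  set b := hA.eigenvectorBasis
  have hz_off : ∀ j ≠ i, ⇑(b j) ⬝ᵥ z = 0 := fun j hj => by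
    by_contra h
    exact hj (hpos j (hA.eigenvalues_eq_of_mulVec_eq_smul hzeig h ▸ hθ))
  have hz_on : ⇑(b i) ⬝ᵥ z ≠ 0 := fun h => hz <| b.eq_zero_of_forall_dotProduct_eq_zero fun j => by
    rcases eq_or_ne j i with rfl | hj
    exacts [h, hz_off j hj]
  have hparseval := b.sum_dotProduct_mul_dotProduct z x
  rw [Finset.sum_eq_single i (fun j _ hj => by rw [hz_off j hj, zero_mul]) (by simp), hzx]
    at hparseval
  exact (mul_eq_zero.mp hparseval).resolve_left hz_on

end IsHermitian

end Matrix

open Matrix in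
theorem trace_nonpos {n e : ℕ}
    (M : Matrix (Fin n) (Fin n) ℝ) (hM : M.IsHermitian)
    (θ : ℝ) (hθ : 0 < θ)
    (hMeig : (Finset.univ.filter fun i => 0 < hM.eigenvalues i).card = 1)
    (z : Fin n → ℝ) (hz : z ≠ 0) (hzeig : M.mulVec z = θ • z)
    (X : Matrix (Fin n) (Fin e) ℝ) (hX : Matrix.vecMul z X = 0) :
    Matrix.trace (M * X * Xᵀ) ≤ 0 ∧
      (Matrix.trace (M * X * Xᵀ) = 0 ↔ M * X = 0) := by
  obtain ⟨i₀, hi₀⟩ := Finset.card_eq_one.mp hMeig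
  have hpos : ∀ i, 0 < hM.eigenvalues i → i = i₀ := fun i hi =>
    Finset.mem_singleton.mp (hi₀ ▸ Finset.mem_filter.mpr ⟨Finset.mem_univ i, hi⟩)
  have hcol : ∀ j, ∀ i, 0 < hM.eigenvalues i → ⇑(hM.eigenvectorBasis i) ⬝ᵥ Xᵀ j = 0 := fun j =>
    hM.eigenvectorBasis_dotProduct_eq_zero_of_dotProduct_eq_zero hpos hθ hz hzeig (congrFun hX j)
  have hnonpos j := hM.dotProduct_mulVec_self_nonpos (hcol j)
  rw [trace_mul_mul_transpose, mul_eq_zero_iff_forall_mulVec_transpose,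
    Finset.sum_eq_zero_iff_of_nonpos fun j _ => hnonpos j]
  refine ⟨Finset.sum_nonpos fun j _ => hnonpos j, ?_⟩
  simpa only [Finset.mem_univ, forall_const]
    using forall_congr' fun j => hM.dotProduct_mulVec_self_eq_zero_iff (hcol j)
end
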